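/- Let Y be a real random variable with finite nonzero fourth moment, mean m, variance v > 0, kurtosis κ = E[(Y − m)⁴]/v², and uniform kurtosis c = sup_{θ ∈ ℝ} E[(Y − θ)⁴]/(E[(Y − θ)²])². Then κ ≤ c ≤ (1/9)(√κ + 2√(κ + 3))² ≤ κ + 2. -/

import Mathlib

/-!
Centre `Y` at its mean: with `X = Y - m`, `s = E[X³]` and `t = m - θ`,
`E[(Y - θ)⁴] = κ v² + 4 t s + 6 v t² + t⁴` and `E[(Y - θ)²] = v + t²`.
Pearson's inequality `s² ≤ (κ - 1) v³` and AM-GM bound the cross term `4 t s`, after which the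
kurtosis about any `θ` is at most `κ + 2 - 1 / (κ + 1)`, with defect proportional to
`(v - κ t²)²`. Both `κ + 2 - 1 / (κ + 1) ≤ (√κ + 2 √(κ + 3))² / 9 ≤ κ + 2` are elementary,
and `κ ≤ c` is the choice `θ = m`.
-/

open MeasureTheory ProbabilityTheory

lemma shifted_fourth_moment_le {κ v s t : ℝ} (hκ : 0 < κ) (hv : 0 < v)
    (hs : s ^ 2 ≤ (κ - 1) * v ^ 3) :
    κ * v ^ 2 + 4 * t * s + 6 * v * t ^ 2 + t ^ 4
      ≤ (κ + 2 - 1 / (κ + 1)) * (v + t ^ 2) ^ 2 := by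
  have amgm : κ * v * (4 * t * s) ≤ 2 * (κ - 1) * v ^ 3 + 2 * κ ^ 2 * v ^ 2 * t ^ 2 := by
    nlinarith [sq_nonneg (s - κ * v * t)]
  rw [show κ + 2 - 1 / (κ + 1) = (κ ^ 2 + 3 * κ + 1) / (κ + 1) by field_simp; ring,
    div_mul_eq_mul_div, le_div_iff₀ (by positivity)]
  refine le_of_mul_le_mul_left ?_ (mul_pos hκ hv)
  -- after `amgm`, what remains is `v (κ + 2) (v - κ t²)² ≥ 0`
  nlinarith [mul_le_mul_of_nonneg_left amgm (by positivity : (0 : ℝ) ≤ κ + 1),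
    mul_nonneg hv.le (mul_nonneg (by positivity : (0 : ℝ) ≤ κ + 2) (sq_nonneg (v - κ * t ^ 2)))]

lemma add_two_sub_inv_le_sq_sqrt {κ : ℝ} (hκ : 0 ≤ κ) :
    κ + 2 - 1 / (κ + 1) ≤ 1 / 9 * (Real.sqrt κ + 2 * Real.sqrt (κ + 3)) ^ 2 := by
  have ha := Real.sq_sqrt hκ
  have hb := Real.sq_sqrt (by linarith : 0 ≤ κ + 3)
  set r := Real.sqrt κ * Real.sqrt (κ + 3) with hr
  have hr0 : 0 ≤ r := by positivity
  have hr2 : r ^ 2 = κ * (κ + 3) := by rw [hr, mul_pow, ha, hb]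
  -- squared: `16 r² (κ + 1)² - (4 κ² + 10 κ - 3)² = 36 κ² + 108 κ - 9`
  have key : 4 * κ ^ 2 + 10 * κ - 3 ≤ 4 * r * (κ + 1) := by
    by_contra! h
    nlinarith [mul_self_lt_mul_self (by positivity) h]
  rw [show κ + 2 - 1 / (κ + 1) = (κ ^ 2 + 3 * κ + 1) / (κ + 1) by field_simp; ring,
    div_le_iff₀ (by positivity)]
  nlinarith

lemma sq_sqrt_add_two_sqrt_le {κ : ℝ} (hκ : 0 ≤ κ) :
    1 / 9 * (Real.sqrt κ + 2 * Real.sqrt (κ + 3)) ^ 2 ≤ κ + 2 := by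
  have ha := Real.sq_sqrt hκ
  have hb := Real.sq_sqrt (by linarith : 0 ≤ κ + 3)
  nlinarith [sq_nonneg (2 * κ + 3 - 2 * Real.sqrt κ * Real.sqrt (κ + 3))]

section

variable {Ω : Type*} [MeasurableSpace Ω] {P : Measure Ω}

lemma memLp_of_integrable_pow_of_even {Y : Ω → ℝ} {n : ℕ} (hn : Even n) (hn0 : n ≠ 0)
    (hY : AEStronglyMeasurable Y P) (hYn : Integrable (fun ω => Y ω ^ n) P) :
    MemLp Y n P := by
  refine (integrable_norm_rpow_iff hY (by exact_mod_cast hn0) (by simp)).1 ?_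
  refine hYn.congr (ae_of_all _ fun ω => ?_)
  simp [Real.norm_eq_abs, hn.pow_abs]

lemma MeasureTheory.MemLp.integrable_pow_of_le [IsFiniteMeasure P] {f : Ω → ℝ}
    {p : ENNReal} {k : ℕ} (hf : MemLp f p P) (hk : k ≤ p) :
    Integrable (fun ω => f ω ^ k) P :=
  (hf.mono_exponent hk).integrable_norm_pow'.mono'
    (hf.aestronglyMeasurable.pow k) (ae_of_all _ fun ω => by simp [norm_pow])

variable [IsProbabilityMeasure P] {X : Ω → ℝ}

lemma integral_quartic (hX : MemLp X 4 P) (a b c d e : ℝ) :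
    ∫ ω, (a + b * X ω + c * X ω ^ 2 + d * X ω ^ 3 + e * X ω ^ 4) ∂P
      = a + b * ∫ ω, X ω ∂P + c * ∫ ω, X ω ^ 2 ∂P + d * ∫ ω, X ω ^ 3 ∂P
        + e * ∫ ω, X ω ^ 4 ∂P := by
  have h1 : Integrable (fun ω => X ω) P := by
    simpa using hX.integrable_pow_of_le (k := 1) (by norm_num)
  have h2 := hX.integrable_pow_of_le (k := 2) (by norm_num)
  have h3 := hX.integrable_pow_of_le (k := 3) (by norm_num)
  have h4 := hX.integrable_pow_of_le (k := 4) (by norm_num)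
  rw [integral_add, integral_add, integral_add, integral_add]
  all_goals first | fun_prop | simp [integral_const_mul]

lemma integral_add_const_sq (hX : MemLp X 2 P) (hX0 : ∫ ω, X ω ∂P = 0) (t : ℝ) :
    ∫ ω, (X ω + t) ^ 2 ∂P = ∫ ω, X ω ^ 2 ∂P + t ^ 2 := by
  have h1 : Integrable (fun ω => X ω) P := by
    simpa using hX.integrable_pow_of_le (k := 1) (by norm_num)
  have h2 := hX.integrable_pow_of_le (k := 2) le_rfl
  simp_rw [add_sq]
  rw [integral_add, integral_add]
  all_goals first | fun_prop | simp [mul_comm _ t, integral_const_mul, hX0]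

lemma integral_add_const_pow_four (hX : MemLp X 4 P) (hX0 : ∫ ω, X ω ∂P = 0) (t : ℝ) :
    ∫ ω, (X ω + t) ^ 4 ∂P
      = ∫ ω, X ω ^ 4 ∂P + 4 * t * ∫ ω, X ω ^ 3 ∂P + 6 * t ^ 2 * ∫ ω, X ω ^ 2 ∂P + t ^ 4 := by
  have e : ∀ ω, (X ω + t) ^ 4
      = t ^ 4 + 4 * t ^ 3 * X ω + 6 * t ^ 2 * X ω ^ 2 + 4 * t * X ω ^ 3 + 1 * X ω ^ 4 :=
    fun ω => by ring
  simp only [e, integral_quartic hX, hX0]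
  ring

/-- Pearson's inequality: squared skewness is at most kurtosis minus one. -/
lemma sq_integral_pow_three_le (hX : MemLp X 4 P) (hX0 : ∫ ω, X ω ∂P = 0) :
    (∫ ω, X ω ^ 3 ∂P) ^ 2
      ≤ (∫ ω, X ω ^ 2 ∂P) * ((∫ ω, X ω ^ 4 ∂P) - (∫ ω, X ω ^ 2 ∂P) ^ 2) := by
  set v := ∫ ω, X ω ^ 2 ∂P
  set s := ∫ ω, X ω ^ 3 ∂P
  have hquad : ∀ l : ℝ, 0 ≤ v * (l * l) + (-2 * s) * l + ((∫ ω, X ω ^ 4 ∂P) - v ^ 2) := by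
    intro l
    have h : 0 ≤ ∫ ω, (l * X ω - (X ω ^ 2 - v)) ^ 2 ∂P := integral_nonneg fun ω => sq_nonneg _
    have e : ∀ ω, (l * X ω - (X ω ^ 2 - v)) ^ 2
        = v ^ 2 + 2 * l * v * X ω + (l ^ 2 - 2 * v) * X ω ^ 2 + (-2 * l) * X ω ^ 3
          + 1 * X ω ^ 4 :=
      fun ω => by ring
    simp only [e, integral_quartic hX, hX0] at h
    linarith
  have hdisc := discrim_le_zero hquad
  rw [discrim] at hdisc
  linarith

noncomputable def kurtosisAbout (P : Measure Ω) (Y : Ω → ℝ) (θ : ℝ) : ℝ :=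
  (∫ ω, (Y ω - θ) ^ 4 ∂P) / (∫ ω, (Y ω - θ) ^ 2 ∂P) ^ 2

lemma kurtosisAbout_le {Y : Ω → ℝ} (hY : MemLp Y 4 P)
    (hv : 0 < ∫ ω, (Y ω - ∫ ω', Y ω' ∂P) ^ 2 ∂P) (θ : ℝ) :
    kurtosisAbout P Y θ
      ≤ kurtosisAbout P Y (∫ ω, Y ω ∂P) + 2 - 1 / (kurtosisAbout P Y (∫ ω, Y ω ∂P) + 1) := by
  set m := ∫ ω, Y ω ∂P
  set X := fun ω => Y ω - m
  have hX : MemLp X 4 P := hY.sub (memLp_const m)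
  have hX0 : ∫ ω, X ω ∂P = 0 := by
    simp [X, integral_sub (hY.integrable (by norm_num)) (integrable_const m), m]
  set v := ∫ ω, X ω ^ 2 ∂P
  set κ := kurtosisAbout P Y m
  have hμ4 : ∫ ω, X ω ^ 4 ∂P = κ * v ^ 2 := by
    rw [show κ = (∫ ω, X ω ^ 4 ∂P) / v ^ 2 from rfl]; field_simp
  set s := ∫ ω, X ω ^ 3 ∂P
  have hpearson : s ^ 2 ≤ v * (κ * v ^ 2 - v ^ 2) := hμ4 ▸ sq_integral_pow_three_le hX hX0
  have hκ : 0 < κ := by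
    have h := (mul_nonneg_iff_of_pos_left hv).1 ((sq_nonneg _).trans hpearson)
    nlinarith [pow_pos hv 2]
  have hshift : ∀ ω, Y ω - θ = X ω + (m - θ) := fun ω => by simp [X]
  rw [kurtosisAbout]
  simp only [hshift, integral_add_const_sq (hX.mono_exponent (by norm_num)) hX0,
    integral_add_const_pow_four hX hX0, hμ4]
  rw [div_le_iff₀ (by positivity)]
  change κ * v ^ 2 + 4 * (m - θ) * s + 6 * (m - θ) ^ 2 * v + (m - θ) ^ 4
    ≤ (κ + 2 - 1 / (κ + 1)) * (v + (m - θ) ^ 2) ^ 2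
  linarith [shifted_fourth_moment_le (s := s) (t := m - θ) hκ hv (by nlinarith)]

end

theorem kurtosis_uniform_kurtosis_comparison
    {Ω : Type*} [MeasurableSpace Ω] (P : Measure Ω) [IsProbabilityMeasure P]
    (Y : Ω → ℝ) (hY : Measurable Y)
    (hL4 : Integrable (fun ω => (Y ω) ^ 4) P)
    (m v κ c : ℝ)
    (hm : m = ∫ ω, Y ω ∂P)
    (hv : v = ∫ ω, (Y ω - m) ^ 2 ∂P) (hvpos : 0 < v)
    (hκ : κ = (∫ ω, (Y ω - m) ^ 4 ∂P) / v ^ 2)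
    (hc : c = ⨆ θ : ℝ, (∫ ω, (Y ω - θ) ^ 4 ∂P) / (∫ ω, (Y ω - θ) ^ 2 ∂P) ^ 2) :
    κ ≤ c ∧
    c ≤ (1 / 9) * (Real.sqrt κ + 2 * Real.sqrt (κ + 3)) ^ 2 ∧
    (1 / 9) * (Real.sqrt κ + 2 * Real.sqrt (κ + 3)) ^ 2 ≤ κ + 2 := by
  have hY4 : MemLp Y 4 P := by
    simpa using memLp_of_integrable_pow_of_even (n := 4) (by decide) (by norm_num)
      hY.aestronglyMeasurable hL4
  have hκm : κ = kurtosisAbout P Y m := by rw [hκ, hv]; rfl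
  have hbound : ∀ θ, kurtosisAbout P Y θ ≤ κ + 2 - 1 / (κ + 1) := by
    subst hm hv; rw [hκm]; exact kurtosisAbout_le hY4 hvpos
  have hκ0 : 0 ≤ κ := hκ ▸ div_nonneg (integral_nonneg fun _ => by positivity) (sq_nonneg v)
  have hbdd : BddAbove (Set.range (kurtosisAbout P Y)) := ⟨_, Set.forall_mem_range.2 hbound⟩
  change c = ⨆ θ, kurtosisAbout P Y θ at hc
  refine ⟨?_, ?_, sq_sqrt_add_two_sqrt_le hκ0⟩
  · rw [hc, hκm]; exact le_ciSup hbdd m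
  · rw [hc]; exact (ciSup_le hbound).trans (add_two_sub_inv_le_sq_sqrt hκ0)
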